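/- (Theorem 4, Completeness) Let E = {(T1,R1),…,(Tm,Rm)} be input-output examples with k-column tables, and suppose there exist column extraction programs π1',…,πk' and a predicate φ' that is a Boolean combination of atomic predicates drawn from a finite set Φ such that [[filter(π1' × ⋯ × πk', λt.φ')]]_T = R for every (T,R) ∈ E. Then: (a) for each i ∈ {1,…,k}, πi' is accepted by the intersection automaton A_i of the automata ConstructDFA(Tj,Rj,i) over j = 1,…,m; and (b) there exists a formula φ in disjunctive normal form over the atomic predicates of Φ, pointwise equal to φ' on all k-tuples of nodes, such that [[filter(π1' × ⋯ × πk', λt.φ)]]_T = R for every (T,R) ∈ E. -/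

import Mathlib

/-- A hierarchical data tree (HDT): a finite rooted tree in which every node
carries a tag, a position (it is the pos'th child with its tag under its
parent), and a data value. -/
structure HDT where
  /-- the (finite) type of nodes -/
  Node : Type
  fintypeNode : Fintype Node
  root : Node
  parent : Node → Option Node
  tag : Node → String
  pos : Node → Nat
  data : Node → String
  parent_root : parent root = none
  parent_isSome : ∀ n, n ≠ root → (parent n).isSome
  reaches_root : ∀ n, Relation.ReflTransGen (fun c p => parent c = some p) n root
  pos_unique : ∀ a b p, parent a = some p → parent b = some p →
    tag a = tag b → pos a = pos b → a = b

/-- `c` is a child of `p`. -/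
def HDT.IsChildOf (T : HDT) (c p : T.Node) : Prop := T.parent c = some p

/-- `d` is a strict descendant of `a`. -/
def HDT.IsDescOf (T : HDT) (d a : T.Node) : Prop := Relation.TransGen T.IsChildOf d a

/-- a leaf is a node with no children. -/
def HDT.IsLeaf (T : HDT) (n : T.Node) : Prop := ∀ c, ¬ T.IsChildOf c n

/-- Column extraction programs:
`π ::= s | children(π,tag) | pchildren(π,tag,pos) | descendants(π,tag)`. -/
inductive ColProg where
  | id : ColProg
  | children : ColProg → String → ColProg
  | pchildren : ColProg → String → Nat → ColProg
  | descendants : ColProg → String → ColProg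

/-- Semantics `[[π]]_{s,T}` of column extraction programs. -/
def evalCol (T : HDT) : ColProg → Set T.Node → Set T.Node
  | .id, s => s
  | .children π tg, s => {c | ∃ p ∈ evalCol T π s, T.IsChildOf c p ∧ T.tag c = tg}
  | .pchildren π tg i, s =>
      {c | ∃ p ∈ evalCol T π s, T.IsChildOf c p ∧ T.tag c = tg ∧ T.pos c = i}
  | .descendants π tg, s => {d | ∃ a ∈ evalCol T π s, T.IsDescOf d a ∧ T.tag d = tg}

/-- A table with `k` columns: a finite set of `k`-tuples of data values. -/
abbrev Table (k : ℕ) := Finset (Fin k → String)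

/-- `column(R,i)`: the set of values occurring in the i'th component of rows of `R`. -/
def tableColumn {k : ℕ} (R : Table k) (i : Fin k) : Set String := {v | ∃ r ∈ R, r i = v}

/-- `π` overapproximates `column(R,i)` on `T`: every value of the column is the data
of some node extracted by `π` from `{root(T)}`. -/
def Overapprox (T : HDT) {k : ℕ} (R : Table k) (i : Fin k) (π : ColProg) : Prop :=
  ∀ v ∈ tableColumn R i, ∃ n ∈ evalCol T π {T.root}, T.data n = v
/-- The alphabet Σ of the constructed DFA: one symbol per column-extraction
operator (instantiated with a tag and, for `pchildren`, a position). -/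
inductive ColSym where
  | children (tag : String)
  | pchildren (tag : String) (pos : Nat)
  | descendants (tag : String)

/-- The result of applying the operator named by a symbol to a set of nodes of `T`. -/
def applySym (T : HDT) (s : Set T.Node) : ColSym → Set T.Node
  | .children tg => {c | ∃ p ∈ s, T.IsChildOf c p ∧ T.tag c = tg}
  | .pchildren tg i => {c | ∃ p ∈ s, T.IsChildOf c p ∧ T.tag c = tg ∧ T.pos c = i}
  | .descendants tg => {d | ∃ a ∈ s, T.IsDescOf d a ∧ T.tag d = tg}

/-- Applying the operators of a word in order, starting from `{root(T)}`. -/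
def runWord (T : HDT) (w : List ColSym) : Set T.Node := w.foldl (applySym T) {T.root}

/-- The sets of nodes reachable from `{root(T)}` by repeatedly applying operators;
these are exactly the states of the constructed DFA. -/
def ReachableSet (T : HDT) (s : Set T.Node) : Prop := ∃ w : List ColSym, runWord T w = s

/-- The column extraction program `π_w` corresponding to a word `w`. -/
def progOfWord (w : List ColSym) : ColProg :=
  w.foldl (fun π f =>
    match f with
    | .children tg => .children π tg
    | .pchildren tg i => .pchildren π tg i
    | .descendants tg => .descendants π tg) .id

/-- The word of operator symbols corresponding to a column extraction program. -/
def wordOfProg : ColProg → List ColSym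
  | .id => []
  | .children π tg => wordOfProg π ++ [.children tg]
  | .pchildren π tg i => wordOfProg π ++ [.pchildren tg i]
  | .descendants π tg => wordOfProg π ++ [.descendants tg]

/-- A state `q_s` is accepting iff every value of `column(R,i)` equals the data
of some node in `s`. -/
def AcceptSet (T : HDT) {k : ℕ} (R : Table k) (i : Fin k) (s : Set T.Node) : Prop :=
  ∀ v ∈ tableColumn R i, ∃ n ∈ s, T.data n = v

/-- `ConstructDFA(T,R,i)`: states are the reachable sets of nodes of `T`, the start
state is `q_{{root(T)}}`, the transition on symbol `f` applies the corresponding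
operator, and `q_s` is accepting iff `s` overapproximates `column(R,i)`. -/
def constructDFA (T : HDT) {k : ℕ} (R : Table k) (i : Fin k) :
    DFA ColSym {s : Set T.Node // ReachableSet T s} where
  step := fun q f =>
    ⟨applySym T q.1 f, by
      obtain ⟨w, hw⟩ := q.2
      refine ⟨w ++ [f], ?_⟩
      simp only [runWord, List.foldl_append, List.foldl_cons, List.foldl_nil] at hw ⊢
      rw [hw]⟩
  start := ⟨{T.root}, ⟨[], rfl⟩⟩
  accept := {q | AcceptSet T R i q.1}

/-- The product (intersection) automaton of a family of DFAs over a common alphabet: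
states are tuples of component states, and a tuple is accepting iff every
component is accepting. -/
def productDFA {m : ℕ} {σ : Fin m → Type} (A : ∀ j, DFA ColSym (σ j)) :
    DFA ColSym (∀ j, σ j) where
  step := fun q f j => (A j).step (q j) f
  start := fun j => (A j).start
  accept := {q | ∀ j, q j ∈ (A j).accept}
/-- Node extractors: `φ ::= n | parent(φ) | child(φ, tag, pos)`. -/
inductive NodeExt where
  | id : NodeExt
  | parent : NodeExt → NodeExt
  | child : NodeExt → String → Nat → NodeExt
deriving DecidableEq

/-- The child of `p` with the given tag and position, if any (it is unique by
the position property of HDTs). -/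
noncomputable def childAt (T : HDT) (p : T.Node) (tg : String) (i : Nat) : Option T.Node := by
  classical
  exact if h : ∃ c, T.IsChildOf c p ∧ T.tag c = tg ∧ T.pos c = i then some h.choose else none

/-- Semantics of node extractors: `⊥` (here `none`) when the required parent or
child does not exist. -/
noncomputable def evalNodeExt (T : HDT) : NodeExt → T.Node → Option T.Node
  | .id, n => some n
  | .parent φ, n => (evalNodeExt T φ n).bind T.parent
  | .child φ tg i, n => (evalNodeExt T φ n).bind fun p => childAt T p tg i

/-- Comparison operators `⊴`. -/
inductive CmpOp where
  | eq | ne | lt | le | gt | ge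
deriving DecidableEq

/-- Evaluation of a comparison operator on data values. -/
def CmpOp.evalData : CmpOp → String → String → Prop
  | .eq, a, b => a = b
  | .ne, a, b => a ≠ b
  | .lt, a, b => a < b
  | .le, a, b => a ≤ b
  | .gt, a, b => b < a
  | .ge, a, b => b ≤ a

/-- Atomic predicates over `k`-tuples `t` of nodes:
`((λn.φ) t[i]) ⊴ c` and `((λn.φ₁) t[i]) ⊴ ((λn.φ₂) t[j])`. -/
inductive AtomPred (k : ℕ) where
  | cmpConst (φ : NodeExt) (i : Fin k) (op : CmpOp) (c : String)
  | cmpNodes (φ₁ : NodeExt) (i : Fin k) (op : CmpOp) (φ₂ : NodeExt) (j : Fin k)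
deriving DecidableEq

/-- Semantics of atomic predicates: a node-constant comparison compares the data of
the extracted node with the constant; a node-node comparison compares data when both
extracted nodes are leaves, tests node identity when `⊴` is `=` and neither is a
leaf, and is false otherwise (in particular when an extractor returns `⊥`). -/
noncomputable def evalAtom (T : HDT) {k : ℕ} : AtomPred k → (Fin k → T.Node) → Prop
  | .cmpConst φ i op c, t =>
      ∃ n, evalNodeExt T φ (t i) = some n ∧ op.evalData (T.data n) c
  | .cmpNodes φ₁ i op φ₂ j, t =>
      ∃ n₁ n₂, evalNodeExt T φ₁ (t i) = some n₁ ∧ evalNodeExt T φ₂ (t j) = some n₂ ∧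
        ((T.IsLeaf n₁ ∧ T.IsLeaf n₂ ∧ op.evalData (T.data n₁) (T.data n₂)) ∨
          (op = CmpOp.eq ∧ ¬ T.IsLeaf n₁ ∧ ¬ T.IsLeaf n₂ ∧ n₁ = n₂))

/-- Predicates: Boolean combinations (∧, ∨, ¬) of atomic predicates. -/
inductive TuplePred (k : ℕ) where
  | atom (a : AtomPred k)
  | and (p q : TuplePred k)
  | or (p q : TuplePred k)
  | not (p : TuplePred k)

/-- Semantics of predicates on a `k`-tuple of nodes of `T`. -/
noncomputable def evalPred (T : HDT) {k : ℕ} : TuplePred k → (Fin k → T.Node) → Prop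
  | .atom a, t => evalAtom T a t
  | .and p q, t => evalPred T p t ∧ evalPred T q t
  | .or p q, t => evalPred T p t ∨ evalPred T q t
  | .not p, t => ¬ evalPred T p t

/-- The set of atomic predicates occurring in a predicate. -/
def atomsOf {k : ℕ} : TuplePred k → Finset (AtomPred k)
  | .atom a => {a}
  | .and p q => atomsOf p ∪ atomsOf q
  | .or p q => atomsOf p ∪ atomsOf q
  | .not p => atomsOf p

/-- Semantics of the table extractor `ψ = π₁ × ⋯ × π_k`:
tuples whose j'th component is extracted by `π_j` from `{root(T)}`. -/
def tableSem (T : HDT) {k : ℕ} (Ψ : Fin k → ColProg) : Set (Fin k → T.Node) :=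
  {t | ∀ j, t j ∈ evalCol T (Ψ j) {T.root}}

/-- The data tuple of a tuple of nodes. -/
def dataTuple (T : HDT) {k : ℕ} (t : Fin k → T.Node) : Fin k → String :=
  fun j => T.data (t j)

/-- Semantics of `filter(ψ, λt.φ)` on `T`: the data tuples of the extracted
tuples satisfying `φ`. -/
noncomputable def filterSem (T : HDT) {k : ℕ} (Ψ : Fin k → ColProg) (φ : TuplePred k) :
    Set (Fin k → String) :=
  {r | ∃ t ∈ tableSem T Ψ, evalPred T φ t ∧ dataTuple T t = r}
/-- Literals: atomic predicates and their negations. -/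
inductive TuplePred.IsLit {k : ℕ} : TuplePred k → Prop
  | atom (a : AtomPred k) : TuplePred.IsLit (.atom a)
  | natom (a : AtomPred k) : TuplePred.IsLit (.not (.atom a))

/-- Finite conjunctions of literals. -/
inductive TuplePred.IsConj {k : ℕ} : TuplePred k → Prop
  | lit {p : TuplePred k} : TuplePred.IsLit p → TuplePred.IsConj p
  | and {p q : TuplePred k} :
      TuplePred.IsConj p → TuplePred.IsConj q → TuplePred.IsConj (.and p q)

/-- Disjunctive normal form: a finite disjunction of finite conjunctions of
atomic predicates and their negations. -/
inductive TuplePred.IsDNF {k : ℕ} : TuplePred k → Prop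
  | conj {p : TuplePred k} : TuplePred.IsConj p → TuplePred.IsDNF p
  | or {p q : TuplePred k} :
      TuplePred.IsDNF p → TuplePred.IsDNF q → TuplePred.IsDNF (.or p q)
/-!
(a) Running `ConstructDFA(T,R,i)` on the word of a program `π` computes `[[π]]_{{root(T)},T}`,
so `π` is accepted exactly when it overapproximates `column(R,i)`; every row of `R` is the data
tuple of an extracted node tuple, so each `πᵢ'` does. (b) `φ'` is equivalent to the disjunction,
over the truth assignments to its atoms that satisfy it, of the conjunction of literals fixing
that assignment; equivalent predicates filter the same table.
-/

section ConstructDFA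

lemma foldl_applySym_wordOfProg (T : HDT) (π : ColProg) (s : Set T.Node) :
    (wordOfProg π).foldl (applySym T) s = evalCol T π s := by
  induction π generalizing s with
  | id => rfl
  | children π tg ih | pchildren π tg i ih | descendants π tg ih =>
    simp only [wordOfProg, List.foldl_append, List.foldl_cons, List.foldl_nil, ih]
    rfl

variable (T : HDT) {k : ℕ} (R : Table k) (i : Fin k)

lemma constructDFA_evalFrom_val (q : {s : Set T.Node // ReachableSet T s}) (w : List ColSym) :
    ((constructDFA T R i).evalFrom q w).1 = w.foldl (applySym T) q.1 := by
  induction w generalizing q with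
  | nil => rfl
  | cons f w ih => exact ih _

lemma constructDFA_eval_wordOfProg (π : ColProg) :
    ((constructDFA T R i).eval (wordOfProg π)).1 = evalCol T π {T.root} := by
  rw [DFA.eval, constructDFA_evalFrom_val]
  exact foldl_applySym_wordOfProg T π _

lemma wordOfProg_mem_constructDFA_accepts_iff (π : ColProg) :
    wordOfProg π ∈ (constructDFA T R i).accepts ↔ Overapprox T R i π := by
  rw [DFA.mem_accepts]
  show AcceptSet T R i _ ↔ _
  rw [constructDFA_eval_wordOfProg]
  rfl

end ConstructDFA

section ProductDFA

variable {m : ℕ} {σ : Fin m → Type} (A : ∀ j, DFA ColSym (σ j))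

lemma productDFA_evalFrom (q : ∀ j, σ j) (w : List ColSym) :
    (productDFA A).evalFrom q w = fun j => (A j).evalFrom (q j) w := by
  induction w generalizing q with
  | nil => rfl
  | cons f w ih => exact ih _

lemma mem_productDFA_accepts_iff (w : List ColSym) :
    w ∈ (productDFA A).accepts ↔ ∀ j, w ∈ (A j).accepts := by
  simp only [DFA.mem_accepts, DFA.eval, productDFA_evalFrom]
  rfl

end ProductDFA

lemma overapprox_of_filterSem_eq (T : HDT) {k : ℕ} {Ψ : Fin k → ColProg} {φ : TuplePred k}
    {R : Table k} (h : filterSem T Ψ φ = (R : Set (Fin k → String))) (i : Fin k) :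
    Overapprox T R i (Ψ i) := by
  rintro v ⟨r, hr, rfl⟩
  obtain ⟨t, ht, -, rfl⟩ : r ∈ filterSem T Ψ φ := h ▸ hr
  exact ⟨t i, ht i, rfl⟩

lemma filterSem_congr (T : HDT) {k : ℕ} (Ψ : Fin k → ColProg) {φ φ' : TuplePred k}
    (h : ∀ t : Fin k → T.Node, evalPred T φ t ↔ evalPred T φ' t) :
    filterSem T Ψ φ = filterSem T Ψ φ' := by
  ext r
  simp only [filterSem, Set.mem_ofPred_eq, h]

namespace TuplePred

variable {k : ℕ}

def evalBool (v : AtomPred k → Bool) : TuplePred k → Bool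
  | .atom a => v a
  | .and p q => p.evalBool v && q.evalBool v
  | .or p q => p.evalBool v || q.evalBool v
  | .not p => !p.evalBool v

lemma evalPred_iff_evalBool {T : HDT} {t : Fin k → T.Node} {v : AtomPred k → Bool} :
    ∀ {p : TuplePred k}, (∀ a ∈ atomsOf p, (evalAtom T a t ↔ v a = true)) →
      (evalPred T p t ↔ p.evalBool v = true)
  | .atom a, h => h a (Finset.mem_singleton_self a)
  | .and p q, h => by
    simp only [evalPred, evalBool, Bool.and_eq_true,
      evalPred_iff_evalBool fun a ha => h a (Finset.mem_union_left _ ha),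
      evalPred_iff_evalBool fun a ha => h a (Finset.mem_union_right _ ha)]
  | .or p q, h => by
    simp only [evalPred, evalBool, Bool.or_eq_true,
      evalPred_iff_evalBool fun a ha => h a (Finset.mem_union_left _ ha),
      evalPred_iff_evalBool fun a ha => h a (Finset.mem_union_right _ ha)]
  | .not p, h => by
    simp only [evalPred, evalBool, Bool.not_eq_true', evalPred_iff_evalBool (p := p) h,
      Bool.not_eq_true]

def firstAtom : TuplePred k → AtomPred k
  | .atom a => a
  | .and p _ | .or p _ | .not p => p.firstAtom

lemma firstAtom_mem_atomsOf : ∀ p : TuplePred k, p.firstAtom ∈ atomsOf p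
  | .atom a => Finset.mem_singleton_self a
  | .and p _ | .or p _ => Finset.mem_union_left _ (firstAtom_mem_atomsOf p)
  | .not p => firstAtom_mem_atomsOf p

section Folds

variable {T : HDT} {t : Fin k → T.Node}

lemma evalPred_foldl_and (p : TuplePred k) (l : List (TuplePred k)) :
    evalPred T (l.foldl .and p) t ↔ evalPred T p t ∧ ∀ q ∈ l, evalPred T q t := by
  induction l generalizing p with
  | nil => simp
  | cons q l ih => simp only [List.foldl_cons, ih, evalPred, List.forall_mem_cons, and_assoc]

lemma evalPred_foldl_or (p : TuplePred k) (l : List (TuplePred k)) :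
    evalPred T (l.foldl .or p) t ↔ evalPred T p t ∨ ∃ q ∈ l, evalPred T q t := by
  induction l generalizing p with
  | nil => simp
  | cons q l ih => simp [ih, evalPred, or_assoc]

lemma isConj_foldl_and {p : TuplePred k} {l : List (TuplePred k)} (hp : p.IsConj)
    (hl : ∀ q ∈ l, q.IsConj) : (l.foldl .and p).IsConj := by
  induction l generalizing p with
  | nil => exact hp
  | cons q l ih => exact ih (.and hp (hl q List.mem_cons_self)) fun r hr => hl r (.tail _ hr)

lemma isDNF_foldl_or {p : TuplePred k} {l : List (TuplePred k)} (hp : p.IsDNF)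
    (hl : ∀ q ∈ l, q.IsDNF) : (l.foldl .or p).IsDNF := by
  induction l generalizing p with
  | nil => exact hp
  | cons q l ih => exact ih (.or hp (hl q List.mem_cons_self)) fun r hr => hl r (.tail _ hr)

lemma atomsOf_foldl_subset {op : TuplePred k → TuplePred k → TuplePred k}
    (hop : ∀ p q, atomsOf (op p q) = atomsOf p ∪ atomsOf q) {Φ : Finset (AtomPred k)}
    {p : TuplePred k} {l : List (TuplePred k)} (hp : atomsOf p ⊆ Φ)
    (hl : ∀ q ∈ l, atomsOf q ⊆ Φ) : atomsOf (l.foldl op p) ⊆ Φ := by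
  induction l generalizing p with
  | nil => exact hp
  | cons q l ih =>
    exact ih (hop p q ▸ Finset.union_subset hp (hl q List.mem_cons_self))
      fun r hr => hl r (.tail _ hr)

end Folds

def literal (S : Finset (AtomPred k)) (a : AtomPred k) : TuplePred k :=
  if a ∈ S then .atom a else .not (.atom a)

lemma isLit_literal (S : Finset (AtomPred k)) (a : AtomPred k) : (literal S a).IsLit := by
  unfold literal
  split
  · exact .atom a
  · exact .natom a

lemma atomsOf_literal (S : Finset (AtomPred k)) (a : AtomPred k) :
    atomsOf (literal S a) = {a} := by
  unfold literal
  split <;> rfl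

lemma evalPred_literal (T : HDT) (t : Fin k → T.Node) (S : Finset (AtomPred k))
    (a : AtomPred k) : evalPred T (literal S a) t ↔ (evalAtom T a t ↔ a ∈ S) := by
  unfold literal
  split <;> simp [evalPred, *]

/-- The conjunction of literals that holds exactly when the atoms of `A` true at a tuple are
those of `S`; the seed `a₀ ∈ A` makes the conjunction nonempty. -/
noncomputable def minterm (a₀ : AtomPred k) (A S : Finset (AtomPred k)) : TuplePred k :=
  (A.toList.map (literal S)).foldl .and (literal S a₀)

lemma isConj_minterm (a₀ : AtomPred k) (A S : Finset (AtomPred k)) :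
    (minterm a₀ A S).IsConj :=
  isConj_foldl_and (.lit (isLit_literal S a₀)) <| by
    simpa using fun a _ => IsConj.lit (isLit_literal S a)

lemma atomsOf_minterm_subset {a₀ : AtomPred k} {A : Finset (AtomPred k)} (ha₀ : a₀ ∈ A)
    (S : Finset (AtomPred k)) : atomsOf (minterm a₀ A S) ⊆ A :=
  atomsOf_foldl_subset (fun _ _ => rfl) (by simpa [atomsOf_literal] using ha₀) <| by
    simp [atomsOf_literal]

lemma evalPred_minterm (T : HDT) (t : Fin k → T.Node) {a₀ : AtomPred k}
    {A : Finset (AtomPred k)} (ha₀ : a₀ ∈ A) (S : Finset (AtomPred k)) :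
    evalPred T (minterm a₀ A S) t ↔ ∀ b ∈ A, (evalAtom T b t ↔ b ∈ S) := by
  simp only [minterm, evalPred_foldl_and, List.forall_mem_map, Finset.mem_toList,
    evalPred_literal, and_iff_right_iff_imp]
  exact fun h => h a₀ ha₀

/-- The truth-table DNF of `p`; the contradiction `a₀ ∧ ¬a₀` seeds the disjunction so that it
is a DNF even when `p` is unsatisfiable. -/
noncomputable def toDNF (p : TuplePred k) : TuplePred k :=
  (((atomsOf p).powerset.filter fun S => p.evalBool (· ∈ S)).toList.map
      (minterm p.firstAtom (atomsOf p))).foldl .or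
    (.and (.atom p.firstAtom) (.not (.atom p.firstAtom)))

lemma isDNF_toDNF (p : TuplePred k) : p.toDNF.IsDNF :=
  isDNF_foldl_or (.conj (.and (.lit (.atom _)) (.lit (.natom _)))) <| by
    simpa only [List.forall_mem_map] using fun S _ => IsDNF.conj (isConj_minterm _ _ S)

lemma atomsOf_toDNF_subset (p : TuplePred k) : atomsOf p.toDNF ⊆ atomsOf p :=
  atomsOf_foldl_subset (fun _ _ => rfl)
    (by simpa [atomsOf] using p.firstAtom_mem_atomsOf) <| by
    simpa only [List.forall_mem_map] using
      fun S _ => atomsOf_minterm_subset p.firstAtom_mem_atomsOf S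

lemma evalPred_toDNF (T : HDT) (t : Fin k → T.Node) (p : TuplePred k) :
    evalPred T p.toDNF t ↔ evalPred T p t := by
  classical
  simp only [toDNF, evalPred_foldl_or, evalPred, and_not_self, false_or, List.mem_map,
    Finset.mem_toList, Finset.mem_filter, Finset.mem_powerset, exists_exists_and_eq_and,
    evalPred_minterm T t p.firstAtom_mem_atomsOf]
  constructor
  · rintro ⟨S, ⟨-, hS⟩, hSt⟩
    exact (evalPred_iff_evalBool fun a ha => by simp [hSt a ha]).2 hS
  · intro h
    refine ⟨(atomsOf p).filter (evalAtom T · t), ⟨Finset.filter_subset _ _, ?_⟩, ?_⟩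
    · exact (evalPred_iff_evalBool fun a ha => by simp [ha]).1 h
    · simp +contextual

end TuplePred

/-- Theorem 4, Completeness: Suppose the program
`filter(π₁' × ⋯ × π_k', λt.φ')`, where `φ'` is a Boolean combination of atomic
predicates drawn from the finite set `Φ`, satisfies all examples. Then (a) for each
column `i`, `π_i'` is accepted by the intersection (product) automaton of the
automata `ConstructDFA(Tj,Rj,i)`; and (b) there is a DNF formula `φ` over the
atomic predicates of `Φ`, pointwise equal to `φ'` on all k-tuples of nodes, such
that `filter(π₁' × ⋯ × π_k', λt.φ)` also satisfies all examples. -/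
theorem completeness
    {k m : ℕ} (E : Fin m → HDT × Table k) (Ψ' : Fin k → ColProg)
    (φ' : TuplePred k) (Φ : Finset (AtomPred k)) (hΦ : atomsOf φ' ⊆ Φ)
    (hfilter : ∀ j, filterSem (E j).1 Ψ' φ' = ((E j).2 : Set (Fin k → String))) :
    (∀ i, wordOfProg (Ψ' i) ∈
        (productDFA fun j => constructDFA (E j).1 (E j).2 i).accepts) ∧
      ∃ φ : TuplePred k, φ.IsDNF ∧ atomsOf φ ⊆ Φ ∧
        (∀ (T : HDT) (t : Fin k → T.Node), evalPred T φ t ↔ evalPred T φ' t) ∧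
        ∀ j, filterSem (E j).1 Ψ' φ = ((E j).2 : Set (Fin k → String)) := by
  refine ⟨fun i => ?_, φ'.toDNF, φ'.isDNF_toDNF, φ'.atomsOf_toDNF_subset.trans hΦ,
    fun T t => φ'.evalPred_toDNF T t, fun j => ?_⟩
  · rw [mem_productDFA_accepts_iff]
    exact fun j => (wordOfProg_mem_constructDFA_accepts_iff _ _ i _).2
      (overapprox_of_filterSem_eq _ (hfilter j) i)
  · rw [filterSem_congr _ _ (φ'.evalPred_toDNF _), hfilter j]
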